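/- arXiv:2311.10308 — 7 statements merged into one kernel-verified Lean document; each statement's English description precedes it below -/
import Mathlib

section
/- Let Γ be a finite non-abelian group. The rainbow connection number of the commuting graph CG(Γ) is at most 3 if and only if Γ has a nontrivial center, or Γ has a trivial center and has at most three maximal abelian subgroups of order 2. -/
/-- The commuting graph of a group: vertices are group elements, two distinct
elements are adjacent iff they commute. -/
def commutingGraph (Γ : Type*) [Group Γ] : SimpleGraph Γ where
  Adj a b := a ≠ b ∧ a * b = b * a
  symm := by
    constructor
    intro a b h
    exact ⟨h.1.symm, h.2.symm⟩
  loopless := by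
    constructor
    intro a h
    exact h.1 rfl

/-- The commuting graph on a subset `X` of a group. -/
def commutingGraphOn (Γ : Type*) [Group Γ] (X : Set Γ) : SimpleGraph X where
  Adj a b := a ≠ b ∧ (a : Γ) * (b : Γ) = (b : Γ) * (a : Γ)
  symm := by
    constructor
    intro a b h
    exact ⟨h.1.symm, h.2.symm⟩
  loopless := by
    constructor
    intro a h
    exact h.1 rfl

/-- The rainbow connection number of a graph: the least `k` such that there is an
edge coloring with `k` colors under which every two distinct vertices are joined
by a path whose edges have pairwise distinct colors. -/
noncomputable def rainbowConnectionNumber {V : Type*} (G : SimpleGraph V) : ℕ :=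
  sInf {k : ℕ | ∃ c : Sym2 V → Fin k,
    ∀ u v : V, u ≠ v → ∃ p : G.Walk u v, p.IsPath ∧ (p.edges.map c).Nodup}

/-- A subgroup is a maximal abelian subgroup if it is abelian and is not properly
contained in any abelian subgroup. -/
def IsMaximalAbelian {Γ : Type*} [Group Γ] (H : Subgroup Γ) : Prop :=
  IsMulCommutative H ∧ ∀ K : Subgroup Γ, IsMulCommutative K → H ≤ K → K = H


section Aux
variable {Γ : Type*} [Group Γ]

/-- auxiliary: a "pendant" element: commutes only with 1 and itself. -/
def RCPend (x : Γ) : Prop := x ≠ 1 ∧ ∀ y : Γ, x * y = y * x → y = 1 ∨ y = x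

lemma rc_exists_good_bool {V : Type*} [Finite V] (R : V → V → Prop)
    (hsymm : ∀ x y, R x y → R y x) (hne : ∀ x y, R x y → y ≠ x) :
    ∃ f : V → Bool, ∀ x, (∃ y, R x y) → ∃ y, R x y ∧ f y ≠ f x := by
  classical
  haveI : Fintype V := Fintype.ofFinite V
  set φ : (V → Bool) → ℕ := fun f =>
    (Finset.univ.filter (fun p : V × V => R p.1 p.2 ∧ f p.1 ≠ f p.2)).card with hφ
  obtain ⟨f, -, hmax⟩ := Finset.exists_max_image Finset.univ φ
    ⟨fun _ => true, Finset.mem_univ _⟩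
  refine ⟨f, fun x hx => ?_⟩
  by_contra hcon
  push_neg at hcon
  obtain ⟨y₀, hy₀⟩ := hx
  set f' := Function.update f x (!f x) with hf'
  have hstrict : φ f < φ f' := by
    apply Finset.card_lt_card
    constructor
    · intro p hp
      simp only [Finset.mem_filter, Finset.mem_univ, true_and] at hp ⊢
      obtain ⟨hR, hne'⟩ := hp
      refine ⟨hR, ?_⟩
      have h1 : p.1 ≠ x := by rintro rfl; exact hne' (hcon _ hR).symm
      have h2 : p.2 ≠ x := by rintro rfl; exact hne' (hcon _ (hsymm _ _ hR))
      simpa [hf', Function.update_of_ne h1, Function.update_of_ne h2] using hne'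
    · intro hsub
      have hmem : (x, y₀) ∈ Finset.univ.filter
          (fun p : V × V => R p.1 p.2 ∧ f' p.1 ≠ f' p.2) := by
        simp only [Finset.mem_filter, Finset.mem_univ, true_and]
        refine ⟨hy₀, ?_⟩
        have hyx : y₀ ≠ x := hne _ _ hy₀
        rw [hf', Function.update_self, Function.update_of_ne hyx, hcon _ hy₀]
        cases f x <;> simp
      have := hsub hmem
      simp only [Finset.mem_filter, Finset.mem_univ, true_and] at this
      exact this.2 (hcon _ hy₀).symm
  exact absurd (hmax f' (Finset.mem_univ _)) (by omega)

lemma rc_closure_pair_comm (a y : Γ) (h : a * y = y * a) :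
    IsMulCommutative (Subgroup.closure {a, y}) := by
  rw [← Subgroup.le_centralizer_iff_isMulCommutative]
  intro g hg
  rw [Subgroup.mem_centralizer_iff]
  intro k hk
  -- k ∈ closure {a,y}, g ∈ closure {a,y}
  have hsub : ({a, y} : Set Γ) ⊆ (Subgroup.centralizer {g} : Set Γ) := by
    have hg' : ∀ s ∈ ({a, y} : Set Γ), s * g = g * s := by
      have : Subgroup.closure {a, y} ≤ Subgroup.centralizer {a, y} := by
        rw [Subgroup.closure_le]
        intro s hs
        rw [SetLike.mem_coe, Subgroup.mem_centralizer_iff]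
        rintro t ht
        rcases hs with rfl | hs <;> rcases ht with rfl | ht <;>
          simp_all [Set.mem_singleton_iff]
      intro s hs
      have := this hg
      rw [Subgroup.mem_centralizer_iff] at this
      exact (this s hs)
    intro s hs
    rw [SetLike.mem_coe, Subgroup.mem_centralizer_iff]
    rintro t rfl
    exact (hg' s hs).symm
  have : Subgroup.closure {a, y} ≤ Subgroup.centralizer {g} := by
    rw [Subgroup.closure_le]; exact hsub
  have hk' := this hk
  rw [Subgroup.mem_centralizer_iff] at hk'
  exact (hk' g rfl).symm
end Aux

section Pend
variable {Γ : Type*} [Group Γ]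

lemma rc_pend_sq {x : Γ} (hx : RCPend x) : x ^ 2 = 1 := by
  rcases hx.2 (x * x) (by group) with h | h
  · rw [pow_two]; exact h
  · exact absurd (mul_left_cancel (a := x) (show x * x = x * 1 by simpa using h)) hx.1

lemma rc_pend_orderOf {x : Γ} (hx : RCPend x) : orderOf x = 2 :=
  orderOf_eq_prime (rc_pend_sq hx) hx.1

lemma rc_pend_zpowers_mem {x : Γ} (hx : RCPend x) :
    Subgroup.zpowers x ∈ {H : Subgroup Γ | IsMaximalAbelian H ∧ Nat.card H = 2} := by
  refine ⟨⟨Subgroup.zpowers_isMulCommutative x, ?_⟩, ?_⟩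
  · intro K hK hle
    refine le_antisymm ?_ hle
    intro k hk
    have hx' : x ∈ K := hle (Subgroup.mem_zpowers x)
    have hcomm : x * k = k * x := by
      haveI := hK; exact Subgroup.mul_comm_of_mem_isMulCommutative (H := K) hx' hk
    rcases hx.2 k hcomm with rfl | heq
    · exact Subgroup.one_mem _
    · exact heq ▸ Subgroup.mem_zpowers x
  · rw [Nat.card_zpowers, rc_pend_orderOf hx]

lemma rc_card_two {H : Subgroup Γ} (hH : Nat.card H = 2) :
    ∃ a : Γ, a ≠ 1 ∧ a ∈ H ∧ (H : Set Γ) = {1, a} := by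
  have hn : (H : Set Γ).ncard = 2 := by
    rw [← Nat.card_coe_set_eq]
    simpa using hH
  obtain ⟨a, b, hab, hset⟩ := Set.ncard_eq_two.mp hn
  have h1 : (1 : Γ) ∈ (H : Set Γ) := H.one_mem
  rw [hset] at h1
  rcases h1 with rfl | rfl
  · exact ⟨b, fun h => hab h.symm, by rw [← SetLike.mem_coe, hset]; right; rfl, hset⟩
  · refine ⟨a, fun h => hab h, by rw [← SetLike.mem_coe, hset]; left; rfl, ?_⟩
    rw [hset, Set.pair_comm]

lemma rc_mem_pend {H : Subgroup Γ}
    (hH : H ∈ {H : Subgroup Γ | IsMaximalAbelian H ∧ Nat.card H = 2}) :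
    ∃ a : Γ, a ∈ H ∧ RCPend a := by
  obtain ⟨a, ha1, haH, hset⟩ := rc_card_two hH.2
  refine ⟨a, haH, ha1, fun y hy => ?_⟩
  have hK : IsMulCommutative (Subgroup.closure {a, y}) := rc_closure_pair_comm a y hy
  have hle : H ≤ Subgroup.closure {a, y} := by
    intro h hh
    rw [← SetLike.mem_coe, hset] at hh
    rcases hh with rfl | rfl
    · exact Subgroup.one_mem _
    · exact Subgroup.subset_closure (by left; rfl)
  have hKH := hH.1.2 _ hK hle
  have hyK : y ∈ Subgroup.closure {a, y} := Subgroup.subset_closure (by right; rfl)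
  rw [hKH, ← SetLike.mem_coe, hset] at hyK
  rcases hyK with rfl | rfl
  · left; rfl
  · right; rfl

lemma rc_pend_inj {x y : Γ} (hx : RCPend x) (hy : RCPend y)
    (h : Subgroup.zpowers x = Subgroup.zpowers y) : x = y := by
  have hxy : x ∈ Subgroup.zpowers y := h ▸ Subgroup.mem_zpowers x
  obtain ⟨n, hn⟩ := hxy
  have hcomm : y * x = x * y := by
    rw [← hn]; exact (Commute.zpow_right (Commute.refl y) n).eq
  rcases hy.2 x hcomm with rfl | rfl
  · exact absurd rfl hx.1
  · rfl
end Pend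

section Graph
variable {Γ : Type*} [Group Γ]

lemma rc_adj {a b : Γ} (h1 : a ≠ b) (h2 : a * b = b * a) : (commutingGraph Γ).Adj a b := ⟨h1, h2⟩

lemma rc_adj_one {a : Γ} (h : a ≠ 1) : (commutingGraph Γ).Adj a 1 := ⟨h, by group⟩

lemma rc_one_adj {a : Γ} (h : a ≠ 1) : (commutingGraph Γ).Adj 1 a := ⟨Ne.symm h, by group⟩

lemma rc_path1 {V : Type*} {G : SimpleGraph V} {u v : V} (h : G.Adj u v)
    {k : ℕ} (c : Sym2 V → Fin k) :
    ∃ p : G.Walk u v, p.IsPath ∧ (p.edges.map c).Nodup := by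
  refine ⟨.cons h .nil, ?_, by simp⟩
  simp [SimpleGraph.Walk.isPath_def, h.ne]

lemma rc_path2 {V : Type*} {G : SimpleGraph V} {u w v : V} (h1 : G.Adj u w) (h2 : G.Adj w v)
    (huv : u ≠ v) {k : ℕ} (c : Sym2 V → Fin k) (hc : c s(u,w) ≠ c s(w,v)) :
    ∃ p : G.Walk u v, p.IsPath ∧ (p.edges.map c).Nodup := by
  refine ⟨.cons h1 (.cons h2 .nil), ?_, by simp [hc]⟩
  simp [SimpleGraph.Walk.isPath_def, h1.ne, h2.ne, huv]

lemma rc_path3 {V : Type*} {G : SimpleGraph V} {u w₁ w₂ v : V} (h1 : G.Adj u w₁)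
    (h2 : G.Adj w₁ w₂) (h3 : G.Adj w₂ v) (huw2 : u ≠ w₂) (huv : u ≠ v) (hw1v : w₁ ≠ v)
    {k : ℕ} (c : Sym2 V → Fin k) (hc1 : c s(u,w₁) ≠ c s(w₁,w₂)) (hc2 : c s(u,w₁) ≠ c s(w₂,v))
    (hc3 : c s(w₁,w₂) ≠ c s(w₂,v)) :
    ∃ p : G.Walk u v, p.IsPath ∧ (p.edges.map c).Nodup := by
  refine ⟨.cons h1 (.cons h2 (.cons h3 .nil)), ?_, by simp [hc1, hc2, hc3]⟩
  simp [SimpleGraph.Walk.isPath_def, h1.ne, h2.ne, h3.ne, huw2, huv, hw1v]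

lemma rc_pend_first_edge {a b : Γ} (ha : RCPend a) (p : (commutingGraph Γ).Walk a b)
    (hab : a ≠ b) : s(a, (1:Γ)) ∈ p.edges := by
  cases p with
  | nil => exact absurd rfl hab
  | @cons _ w _ h q =>
    have hw : w = 1 := by
      rcases ha.2 w h.2 with h1 | h2
      · exact h1
      · exact absurd h2.symm h.1
    subst hw
    simp

lemma rc_exists_coloring (Γ : Type*) [Group Γ] [Finite Γ]
    (h : rainbowConnectionNumber (commutingGraph Γ) ≤ 3) :
    ∃ c : Sym2 Γ → Fin 3, ∀ u v : Γ, u ≠ v →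
      ∃ p : (commutingGraph Γ).Walk u v, p.IsPath ∧ (p.edges.map c).Nodup := by
  classical
  haveI : Fintype Γ := Fintype.ofFinite Γ
  have hne : {k : ℕ | ∃ c : Sym2 Γ → Fin k,
      ∀ u v : Γ, u ≠ v → ∃ p : (commutingGraph Γ).Walk u v,
        p.IsPath ∧ (p.edges.map c).Nodup}.Nonempty := by
    refine ⟨Fintype.card (Sym2 Γ), ⇑(Fintype.equivFin (Sym2 Γ)), fun u v huv => ?_⟩
    by_cases hu : u = 1
    · subst hu; exact rc_path1 (rc_one_adj (Ne.symm huv)) _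
    · by_cases hv : v = 1
      · subst hv; exact rc_path1 (rc_adj_one hu) _
      · refine rc_path2 (rc_adj_one hu) (rc_one_adj hv) huv _ ?_
        intro hcc
        have := (Fintype.equivFin (Sym2 Γ)).injective hcc
        rw [Sym2.eq_iff] at this
        tauto
  have hmem := Nat.sInf_mem hne
  rw [rainbowConnectionNumber] at h
  obtain ⟨c, hc⟩ := hmem
  refine ⟨fun s => Fin.castLE h (c s), fun u v huv => ?_⟩
  obtain ⟨p, hp, hnd⟩ := hc u v huv
  refine ⟨p, hp, ?_⟩
  have : (p.edges.map fun s => Fin.castLE h (c s)) = (p.edges.map c).map (Fin.castLE h) := by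
    rw [List.map_map]; rfl
  rw [this]
  exact hnd.map (Fin.castLE_injective h)
end Graph

lemma rc_mp (Γ : Type*) [Group Γ] [Finite Γ]
    (h : rainbowConnectionNumber (commutingGraph Γ) ≤ 3) :
    {H : Subgroup Γ | IsMaximalAbelian H ∧ Nat.card H = 2}.ncard ≤ 3 := by
  classical
  obtain ⟨c, hc⟩ := rc_exists_coloring Γ h
  set S := {H : Subgroup Γ | IsMaximalAbelian H ∧ Nat.card H = 2} with hS
  set g : Subgroup Γ → Γ :=
    fun H => if hH : ∃ a, a ∈ H ∧ RCPend a then hH.choose else 1 with hg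
  have hgP : ∀ H ∈ S, g H ∈ H ∧ RCPend (g H) := by
    intro H hH
    have hex : ∃ a, a ∈ H ∧ RCPend a := rc_mem_pend hH
    rw [hg]
    dsimp only
    rw [dif_pos hex]
    exact hex.choose_spec
  have hinj : Set.InjOn (fun H => c s(1, g H)) S := by
    intro H hH K hK heq
    obtain ⟨hgH, hpH⟩ := hgP H hH
    obtain ⟨hgK, hpK⟩ := hgP K hK
    by_cases hab : g H = g K
    · obtain ⟨a, ha1, haH, hsetH⟩ := rc_card_two hH.2
      obtain ⟨b, hb1, hbK, hsetK⟩ := rc_card_two hK.2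
      have h1 : g H = a := by
        have h' := hgH
        rw [← SetLike.mem_coe, hsetH] at h'
        rcases h' with h' | h'
        · exact absurd h' hpH.1
        · exact h'
      have h2 : g K = b := by
        have h' := hgK
        rw [← SetLike.mem_coe, hsetK] at h'
        rcases h' with h' | h'
        · exact absurd h' hpK.1
        · exact h'
      apply SetLike.ext'
      rw [hsetH, hsetK, ← h1, ← h2, hab]
    · have heq' : c s(g H, (1:Γ)) = c s(g K, (1:Γ)) := by
        rw [show s(g H, (1:Γ)) = s((1:Γ), g H) from Sym2.eq_swap,
            show s(g K, (1:Γ)) = s((1:Γ), g K) from Sym2.eq_swap]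
        exact heq
      obtain ⟨p, hp, hnd⟩ := hc (g H) (g K) hab
      have e1 : s(g H, (1:Γ)) ∈ p.edges := rc_pend_first_edge hpH p hab
      have e2 : s(g K, (1:Γ)) ∈ p.edges := by
        have := rc_pend_first_edge hpK p.reverse (Ne.symm hab)
        rwa [SimpleGraph.Walk.edges_reverse, List.mem_reverse] at this
      have hinj2 := List.inj_on_of_nodup_map hnd
      have := hinj2 e1 e2 heq'
      rw [Sym2.eq_iff] at this
      rcases this with ⟨h', -⟩ | ⟨h', -⟩
      · exact absurd h' hab
      · exact absurd h' hpH.1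
  have hle := Set.ncard_le_ncard_of_injOn (fun H => c s(1, g H))
    (fun a _ => Set.mem_univ _) hinj Set.finite_univ
  simpa [Set.ncard_univ] using hle

lemma rc_case_center (Γ : Type*) [Group Γ] [Finite Γ] (hz : Subgroup.center Γ ≠ ⊥) :
    rainbowConnectionNumber (commutingGraph Γ) ≤ 3 := by
  classical
  obtain ⟨⟨z, hzc⟩, hz1⟩ := Subgroup.ne_bot_iff_exists_ne_one.mp hz
  have hz1' : z ≠ 1 := by
    intro h
    exact hz1 (Subtype.ext h)
  have hzcomm : ∀ g : Γ, z * g = g * z := fun g =>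
    (Subgroup.mem_center_iff.mp hzc g).symm
  apply Nat.sInf_le
  refine ⟨Sym2.lift ⟨fun a b => if (a = 1 ∧ b = z) ∨ (b = 1 ∧ a = z) then 2
    else if a = 1 ∨ b = 1 then 0 else if a = z ∨ b = z then 1 else 2, ?_⟩, ?_⟩
  · intro a b
    dsimp only
    split_ifs <;> tauto
  · intro u v huv
    by_cases hu : u = 1
    · subst hu; exact rc_path1 (rc_one_adj (Ne.symm huv)) _
    by_cases hv : v = 1
    · subst hv; exact rc_path1 (rc_adj_one hu) _
    by_cases huz : u = z
    · subst huz; exact rc_path1 (rc_adj huv (hzcomm v)) _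
    by_cases hvz : v = z
    · subst hvz; exact rc_path1 (rc_adj huv (hzcomm u).symm) _
    refine rc_path3 (rc_adj_one hu) (rc_one_adj hz1') (rc_adj (Ne.symm hvz) (hzcomm v))
      huz huv (Ne.symm hv) _ ?_ ?_ ?_ <;>
      simp [Sym2.lift_mk, hu, hv, huz, hvz, hz1']

lemma rc_case_pend (Γ : Type*) [Group Γ] [Finite Γ]
    (hP : {x : Γ | RCPend x}.ncard ≤ 3) :
    rainbowConnectionNumber (commutingGraph Γ) ≤ 3 := by
  classical
  haveI : Fintype Γ := Fintype.ofFinite Γ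
  haveI : Fintype {x : Γ // RCPend x} := Fintype.ofFinite _
  have hcard : Fintype.card {x : Γ // RCPend x} ≤ 3 := by
    rw [← Nat.card_eq_fintype_card]
    exact le_trans (le_of_eq (Nat.card_coe_set_eq {x : Γ | RCPend x})) hP
  set ι : {x : Γ // RCPend x} → Fin 3 :=
    fun x => Fin.castLE hcard (Fintype.equivFin _ x) with hιdef
  have hι : Function.Injective ι :=
    (Fin.castLE_injective hcard).comp (Fintype.equivFin _).injective
  obtain ⟨f, hf⟩ := rc_exists_good_bool (V := Γ)
    (fun x y => x ≠ 1 ∧ y ≠ 1 ∧ x ≠ y ∧ x * y = y * x)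
    (fun x y h => ⟨h.2.1, h.1, Ne.symm h.2.2.1, h.2.2.2.symm⟩)
    (fun x y h => Ne.symm h.2.2.1)
  set h0 : Γ → Fin 3 :=
    fun x => if hx : RCPend x then ι ⟨x, hx⟩ else if f x then 0 else 1 with hh0
  set g : Γ → Γ → Fin 3 :=
    fun a b => if a = 1 then h0 b else if b = 1 then h0 a else 2 with hgdef
  have hsymm : ∀ a b, g a b = g b a := by
    intro a b
    rw [hgdef]
    dsimp only
    split_ifs with h1 h2 h3 <;> simp_all
  set c : Sym2 Γ → Fin 3 := Sym2.lift ⟨g, hsymm⟩ with hcdef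
  have hc1 : ∀ x : Γ, c s((1:Γ), x) = h0 x := by
    intro x; rw [hcdef, Sym2.lift_mk]; simp [hgdef]
  have hc1' : ∀ x : Γ, x ≠ 1 → c s(x, (1:Γ)) = h0 x := by
    intro x hx; rw [hcdef, Sym2.lift_mk]; simp [hgdef, hx]
  have hc2 : ∀ x y : Γ, x ≠ 1 → y ≠ 1 → c s(x, y) = 2 := by
    intro x y hx hy; rw [hcdef, Sym2.lift_mk]; simp [hgdef, hx, hy]
  have h0P : ∀ x (hx : RCPend x), h0 x = ι ⟨x, hx⟩ := by
    intro x hx; rw [hh0]; simp [hx]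
  have h0N : ∀ x, ¬ RCPend x → h0 x = if f x then 0 else 1 := by
    intro x hx; rw [hh0]; simp [hx]
  have h0N2 : ∀ x, ¬ RCPend x → h0 x ≠ 2 := by
    intro x hx
    rw [h0N x hx]
    cases f x <;> decide
  have h0Nf : ∀ x y, ¬ RCPend x → ¬ RCPend y → f x ≠ f y → h0 x ≠ h0 y := by
    intro x y hx hy hfxy
    rw [h0N x hx, h0N y hy]
    cases hfx : f x <;> cases hfy : f y <;>
      first
        | exact absurd (hfx.trans hfy.symm) hfxy
        | decide
  have hnb : ∀ v : Γ, v ≠ 1 → ¬ RCPend v →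
      ∃ y, y ≠ 1 ∧ y ≠ v ∧ ¬ RCPend y ∧ v * y = y * v ∧ f y ≠ f v := by
    intro v hv hnp
    rw [RCPend] at hnp
    push_neg at hnp
    obtain ⟨y0, hy0c, hy01, hy0v⟩ := hnp hv
    obtain ⟨y, hyR, hyf⟩ := hf v ⟨y0, hv, hy01, Ne.symm hy0v, hy0c⟩
    have hyc := hyR.2.2.2
    have hyv : y ≠ v := Ne.symm hyR.2.2.1
    have hyP : ¬ RCPend y := by
      intro hp
      rcases hp.2 v hyc.symm with h | h
      · exact hv h
      · exact hyv h.symm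
    exact ⟨y, hyR.2.1, hyv, hyP, hyc, hyf⟩
  apply Nat.sInf_le
  refine ⟨c, fun u v huv => ?_⟩
  by_cases hu : u = 1
  · subst hu; exact rc_path1 (rc_one_adj (Ne.symm huv)) _
  by_cases hv : v = 1
  · subst hv; exact rc_path1 (rc_adj_one hu) _
  by_cases hcomm : u * v = v * u
  · exact rc_path1 (rc_adj huv hcomm) _
  by_cases hco : h0 u = h0 v
  · by_cases hpu : RCPend u
    · by_cases hpv : RCPend v
      · exfalso
        rw [h0P u hpu, h0P v hpv] at hco
        exact huv (congrArg Subtype.val (hι hco))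
      · -- u pendant, v not : path u - 1 - y - v
        obtain ⟨y, hy1, hyv, hyP, hyc, hyf⟩ := hnb v hv hpv
        have huy : u ≠ y := by
          rintro rfl
          rcases hpu.2 v hyc.symm with h | h
          · exact hv h
          · exact huv h.symm
        refine rc_path3 (rc_adj_one hu) (rc_one_adj hy1)
          (rc_adj hyv (hyc.symm)) huy huv (Ne.symm hv) c ?_ ?_ ?_
        · rw [hc1' u hu, hc1 y]
          rw [hco]
          exact fun h => (h0Nf y v hyP hpv hyf) h.symm
        · rw [hc1' u hu, hc2 y v hy1 hv, hco]
          exact h0N2 v hpv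
        · rw [hc1 y, hc2 y v hy1 hv]
          exact h0N2 y hyP
    · -- u not pendant : path u - y - 1 - v
      obtain ⟨y, hy1, hyu, hyP, hyc, hyf⟩ := hnb u hu hpu
      have hyv : y ≠ v := by
        rintro rfl
        exact hcomm hyc
      refine rc_path3 (rc_adj (Ne.symm hyu) hyc) (rc_adj_one hy1)
        (rc_one_adj hv) hu huv hyv c ?_ ?_ ?_
      · rw [hc2 u y hu hy1, hc1' y hy1]
        exact fun h => (h0N2 y hyP) h.symm
      · rw [hc2 u y hu hy1, hc1 v, ← hco]
        exact fun h => (h0N2 u hpu) h.symm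
      · rw [hc1' y hy1, hc1 v, ← hco]
        exact h0Nf y u hyP hpu hyf
  · refine rc_path2 (rc_adj_one hu) (rc_one_adj hv) huv c ?_
    rw [hc1' u hu, hc1 v]
    exact hco

lemma rc_pend_ncard (Γ : Type*) [Group Γ] [Finite Γ]
    (hS : {H : Subgroup Γ | IsMaximalAbelian H ∧ Nat.card H = 2}.ncard ≤ 3) :
    {x : Γ | RCPend x}.ncard ≤ 3 := by
  haveI : Finite (Subgroup Γ) :=
    Finite.of_injective (fun H : Subgroup Γ => (H : Set Γ)) SetLike.coe_injective
  refine le_trans (Set.ncard_le_ncard_of_injOn (fun x => Subgroup.zpowers x) ?_ ?_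
    (Set.toFinite _)) hS
  · intro a ha; exact rc_pend_zpowers_mem ha
  · intro a ha b hb h; exact rc_pend_inj ha hb h

theorem rc_commutingGraph_le_three_iff (Γ : Type*) [Group Γ] [Finite Γ]
    (hna : ∃ a b : Γ, a * b ≠ b * a) :
    rainbowConnectionNumber (commutingGraph Γ) ≤ 3 ↔
      (Subgroup.center Γ ≠ ⊥ ∨
        (Subgroup.center Γ = ⊥ ∧
          {H : Subgroup Γ | IsMaximalAbelian H ∧ Nat.card H = 2}.ncard ≤ 3)) := by
  constructor
  · intro h
    by_cases hz : Subgroup.center Γ = ⊥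
    · exact Or.inr ⟨hz, rc_mp Γ h⟩
    · exact Or.inl hz
  · rintro (hz | ⟨-, hS⟩)
    · exact rc_case_center Γ hz
    · exact rc_case_pend Γ (rc_pend_ncard Γ hS)
end

section
/- If Γ is a finite non-abelian group whose center Z(Γ) contains at least two elements, then the rainbow connection number of the commuting graph CG(Γ) is at most 3. -/
theorem rc_commutingGraph_le_three_of_center (Γ : Type*) [Group Γ] [Finite Γ]
    (hna : ∃ a b : Γ, a * b ≠ b * a)
    (hz : 2 ≤ Nat.card (Subgroup.center Γ)) :
    rainbowConnectionNumber (commutingGraph Γ) ≤ 3 := by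
  classical
  -- extract a nontrivial central element
  have hnt : Nontrivial (Subgroup.center Γ) := by
    rw [← Finite.one_lt_card_iff_nontrivial]
    omega
  obtain ⟨z, hzc, hz1⟩ : ∃ z ∈ Subgroup.center Γ, z ≠ 1 := by
    obtain ⟨⟨z, hzc⟩, hzne⟩ := exists_ne (1 : Subgroup.center Γ)
    exact ⟨z, hzc, by simpa [Subtype.ext_iff] using hzne⟩
  -- coloring
  set c : Sym2 Γ → Fin 3 := fun e =>
    if (1 : Γ) ∈ e then (if z ∈ e then 2 else 0) else (if z ∈ e then 1 else 0) with hc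
  apply Nat.sInf_le
  refine ⟨c, ?_⟩
  intro u v huv
  by_cases hco : u * v = v * u
  · -- single edge
    refine ⟨SimpleGraph.Walk.cons ⟨huv, hco⟩ SimpleGraph.Walk.nil, ?_, ?_⟩
    · simp [SimpleGraph.Walk.isPath_def, huv]
      show [u, v].Nodup
      simp [huv]
    · show [c s(u, v)].Nodup
      simp
  · -- u and v are noncentral
    have hu1 : u ≠ 1 := by rintro rfl; exact hco (by group)
    have hv1 : v ≠ 1 := by rintro rfl; exact hco (by group)
    have huz : u ≠ z := by rintro rfl; exact hco ((Subgroup.mem_center_iff.mp hzc v).symm)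
    have hvz : v ≠ z := by rintro rfl; exact hco (Subgroup.mem_center_iff.mp hzc u)
    have h1z : (1 : Γ) ≠ z := Ne.symm hz1
    have a1 : (commutingGraph Γ).Adj u 1 := ⟨hu1, by group⟩
    have a2 : (commutingGraph Γ).Adj 1 z := ⟨h1z, by group⟩
    have a3 : (commutingGraph Γ).Adj z v :=
      ⟨Ne.symm hvz, (Subgroup.mem_center_iff.mp hzc v).symm⟩
    refine ⟨SimpleGraph.Walk.cons a1 (SimpleGraph.Walk.cons a2
      (SimpleGraph.Walk.cons a3 SimpleGraph.Walk.nil)), ?_, ?_⟩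
    · simp [SimpleGraph.Walk.isPath_def, huv, hu1, hv1, huz, hvz, h1z, Ne.symm hvz,
        Ne.symm hv1, Ne.symm hz1]
    · have e1 : c s(u, 1) = 0 := by simp [hc, Sym2.mem_iff, Ne.symm huz, hz1]
      have e2 : c s(1, z) = 2 := by simp [hc, Sym2.mem_iff]
      have e3 : c s(z, v) = 1 := by simp [hc, Sym2.mem_iff, h1z, Ne.symm hv1]
      simp [e1, e2, e3]
end

section
/- If Γ is a finite non-abelian group with trivial center that has at most three maximal abelian subgroups of order 2, then the rainbow connection number of the commuting graph CG(Γ) is at most 3. -/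
namespace RC3Aux

open Subgroup SimpleGraph

variable {Γ : Type*} [Group Γ]

def Pend (u : Γ) : Prop := u ≠ 1 ∧ ∀ x : Γ, x * u = u * x → x = 1 ∨ x = u

lemma Pend.sq {u : Γ} (h : Pend u) : u * u = 1 := by
  rcases h.2 u⁻¹ (by group) with h1 | h1
  · exact absurd (inv_eq_one.mp h1) h.1
  · exact mul_eq_one_iff_inv_eq.mpr h1

lemma not_pend_of_comm {u x : Γ} (hu1 : u ≠ 1) (hxu : x ≠ u) (hc : x * u = u * x) :
    ¬ Pend x := by
  intro hp
  rcases hp.2 u hc.symm with h | h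
  · exact hu1 h
  · exact hxu h.symm

def Tox (u : Γ) : Prop := u ≠ 1 ∧ u * u = 1 ∧ ∀ x : Γ, x * u = u * x → x * x = 1

lemma tox_comm {u x y : Γ} (hu : Tox u) (hx : x * u = u * x) (hy : y * u = u * y) :
    x * y = y * x := by
  have hx2 : x * x = 1 := hu.2.2 x hx
  have hy2 : y * y = 1 := hu.2.2 y hy
  have hxy : (x * y) * u = u * (x * y) := by
    rw [mul_assoc, hy, ← mul_assoc, hx, mul_assoc]
  have hxy2 : (x * y) * (x * y) = 1 := hu.2.2 _ hxy
  have hxi : x⁻¹ = x := inv_eq_of_mul_eq_one_right hx2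
  have hyi : y⁻¹ = y := inv_eq_of_mul_eq_one_right hy2
  calc x * y = (x * y)⁻¹ := (inv_eq_of_mul_eq_one_right hxy2).symm
    _ = y⁻¹ * x⁻¹ := mul_inv_rev x y
    _ = y * x := by rw [hxi, hyi]

def TS (u : Γ) : Set Γ := {x | Tox x ∧ x * u = u * x}

lemma TS_eq {u v : Γ} (hu : Tox u) (hv : Tox v) (hvu : v * u = u * v) : TS u = TS v := by
  ext z
  constructor
  · rintro ⟨hzT, hz⟩
    exact ⟨hzT, tox_comm hu hz hvu⟩
  · rintro ⟨hzT, hz⟩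
    exact ⟨hzT, tox_comm hv hz hvu.symm⟩

open scoped Classical in
noncomputable def col (f : Γ → ℕ) (g : {u : Γ // Pend u} → Fin 3) (u : Γ) : Fin 3 :=
  if hu : Pend u then g ⟨u, hu⟩
  else if u * u = 1 then (if Tox u ∧ f u = sInf (f '' TS u) then 0 else 2)
  else if f u < f u⁻¹ then 0 else 1

lemma col_pend (f : Γ → ℕ) (g : {u : Γ // Pend u} → Fin 3) {u : Γ} (hu : Pend u) :
    col f g u = g ⟨u, hu⟩ := dif_pos hu

lemma exists_coloring [Finite Γ] (hp : {u : Γ | Pend u}.ncard ≤ 3) :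
    ∃ a : Γ → Fin 3, Set.InjOn a {u : Γ | Pend u} ∧
      ∀ u : Γ, u ≠ 1 → ¬ Pend u →
        ∃ x : Γ, x ≠ 1 ∧ x ≠ u ∧ x * u = u * x ∧ a x ≠ a u := by
  classical
  obtain ⟨f, hf⟩ := Countable.exists_injective_nat Γ
  haveI : Fintype {u : Γ | Pend u} := Fintype.ofFinite _
  have hcard : Fintype.card {u : Γ | Pend u} ≤ Fintype.card (Fin 3) := by
    rw [Fintype.card_fin, ← Nat.card_eq_fintype_card, Nat.card_coe_set_eq]
    exact hp
  obtain ⟨g⟩ := Function.Embedding.nonempty_of_card_le hcard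
  refine ⟨col f g, ?_, ?_⟩
  · intro u hu v hv h
    rw [col_pend f g hu, col_pend f g hv] at h
    exact congrArg Subtype.val (g.injective h)
  · intro u hu1 hup
    have hwitness : ∃ x : Γ, x * u = u * x ∧ x ≠ 1 ∧ x ≠ u := by
      unfold Pend at hup
      push_neg at hup
      exact hup hu1
    by_cases hu2 : u * u = 1
    · by_cases hutox : Tox u
      · by_cases hmin : f u = sInf (f '' TS u)
        · -- u is the minimum of its toxic class
          obtain ⟨x, hxc, hx1, hxu⟩ := hwitness
          have hxp : ¬ Pend x := not_pend_of_comm hu1 hxu hxc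
          have hx2 : x * x = 1 := hutox.2.2 x hxc
          refine ⟨x, hx1, hxu, hxc, ?_⟩
          have hau : col f g u = 0 := by
            unfold col
            rw [dif_neg hup, if_pos hu2, if_pos ⟨hutox, hmin⟩]
          have hax : col f g x = 2 := by
            have hcond : ¬ (Tox x ∧ f x = sInf (f '' TS x)) := by
              rintro ⟨hxT, hxmin⟩
              have hTS : TS u = TS x := TS_eq hutox hxT hxc
              rw [← hTS, ← hmin] at hxmin
              exact hxu (hf hxmin)
            unfold col
            rw [dif_neg hxp, if_pos hx2, if_neg hcond]
          rw [hau, hax]; decide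
        · -- u is not the minimum; witness is the minimum m of its toxic class
          have hne : (f '' TS u).Nonempty := ⟨f u, u, ⟨hutox, rfl⟩, rfl⟩
          obtain ⟨m, hmS, hmf⟩ := Nat.sInf_mem hne
          have hmu : m ≠ u := by
            intro h; exact hmin (by rw [← hmf, h])
          have hmp : ¬ Pend m := not_pend_of_comm hu1 hmu hmS.2
          refine ⟨m, hmS.1.1, hmu, hmS.2, ?_⟩
          have hau : col f g u = 2 := by
            have hcond : ¬ (Tox u ∧ f u = sInf (f '' TS u)) := by
              rintro ⟨-, h⟩; exact hmin h
            unfold col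
            rw [dif_neg hup, if_pos hu2, if_neg hcond]
          have ham : col f g m = 0 := by
            have hcond : Tox m ∧ f m = sInf (f '' TS m) := by
              refine ⟨hmS.1, ?_⟩
              rw [← TS_eq hutox hmS.1 hmS.2]
              exact hmf
            unfold col
            rw [dif_neg hmp, if_pos hmS.1.2.1, if_pos hcond]
          rw [hau, ham]; decide
      · -- non-toxic involution: commutes with a non-involution
        have : ∃ x : Γ, x * u = u * x ∧ x * x ≠ 1 := by
          unfold Tox at hutox
          push_neg at hutox
          exact hutox hu1 hu2
        obtain ⟨x, hxc, hx2⟩ := this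
        have hx1 : x ≠ 1 := by rintro rfl; exact hx2 (one_mul 1)
        have hxu : x ≠ u := by rintro rfl; exact hx2 hu2
        have hxp : ¬ Pend x := fun h => hx2 h.sq
        refine ⟨x, hx1, hxu, hxc, ?_⟩
        have hau : col f g u = 2 := by
          unfold col
          rw [dif_neg hup, if_pos hu2, if_neg (fun h => hutox h.1)]
        have hax : col f g x = if f x < f x⁻¹ then 0 else 1 := by
          unfold col
          rw [dif_neg hxp, if_neg hx2]
        rw [hau, hax]
        by_cases h : f x < f x⁻¹ <;> simp [h]
    · -- non-involution: u⁻¹ is a witness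
      have hiu : u⁻¹ ≠ u := by
        intro h
        exact hu2 (mul_eq_one_iff_inv_eq.mpr h)
      have hi1 : u⁻¹ ≠ 1 := fun h => hu1 (inv_eq_one.mp h)
      have hi2 : u⁻¹ * u⁻¹ ≠ 1 := by
        intro h
        rw [← mul_inv_rev, inv_eq_one] at h
        exact hu2 h
      have hip : ¬ Pend u⁻¹ := fun h => hi2 h.sq
      refine ⟨u⁻¹, hi1, hiu, by group, ?_⟩
      have hau : col f g u = if f u < f u⁻¹ then 0 else 1 := by
        unfold col
        rw [dif_neg hup, if_neg hu2]
      have hai : col f g u⁻¹ = if f u⁻¹ < f u then 0 else 1 := by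
        unfold col
        rw [dif_neg hip, if_neg hi2, inv_inv]
      have hfne : f u⁻¹ ≠ f u := fun h => hiu (hf h)
      rw [hau, hai]
      rcases lt_or_gt_of_ne hfne with h | h
      · rw [if_pos h, if_neg (not_lt_of_gt h)]; decide
      · rw [if_neg (not_lt_of_gt h), if_pos h]; decide

end RC3Aux

namespace RC3Aux

variable {Γ : Type*} [Group Γ]

lemma pend_ncard_le [Finite Γ]
    (hord2 : {H : Subgroup Γ | IsMaximalAbelian H ∧ Nat.card H = 2}.ncard ≤ 3) :
    {u : Γ | Pend u}.ncard ≤ 3 := by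
  haveI : Finite (Subgroup Γ) :=
    Finite.of_injective (fun H : Subgroup Γ => (H : Set Γ)) (fun H K h => SetLike.coe_injective h)
  refine le_trans (Set.ncard_le_ncard_of_injOn (fun u => Subgroup.zpowers u) ?_ ?_
    (Set.toFinite _)) hord2
  · intro u hu
    have hu' : Pend u := hu
    constructor
    · constructor
      · exact Subgroup.zpowers_isMulCommutative u
      · intro K hK hle
        refine le_antisymm ?_ hle
        intro k hk
        have hcomm : k * u = u * k := by
          haveI := hK
          exact Subgroup.mul_comm_of_mem_isMulCommutative (H := K) hk
            (hle (Subgroup.mem_zpowers u))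
        rcases hu'.2 k hcomm with h | h
        · rw [h]; exact Subgroup.one_mem _
        · rw [h]; exact Subgroup.mem_zpowers u
    · haveI : Fact (Nat.Prime 2) := ⟨Nat.prime_two⟩
      rw [Nat.card_zpowers]
      exact orderOf_eq_prime (by rw [pow_two]; exact hu'.sq) hu'.1
  · intro u hu v hv h
    have hu' : Pend u := hu
    have hv' : Pend v := hv
    have h' : Subgroup.zpowers u = Subgroup.zpowers v := h
    have hm : u ∈ Subgroup.zpowers v := by
      rw [← h']; exact Subgroup.mem_zpowers u
    rw [Subgroup.mem_zpowers_iff] at hm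
    obtain ⟨n, hn⟩ := hm
    have hcomm : u * v = v * u := by
      rw [← hn]; exact ((Commute.refl v).zpow_left n).eq
    rcases hv'.2 u hcomm with h1 | h1
    · exact absurd h1 hu'.1
    · exact h1

def third (i j : Fin 3) : Fin 3 := ⟨(6 - i.1 - j.1) % 3, Nat.mod_lt _ (by norm_num)⟩

lemma third_symm : ∀ i j : Fin 3, third i j = third j i := by decide

lemma cg_adj {a b : Γ} (h1 : a ≠ b) (h2 : a * b = b * a) : (commutingGraph Γ).Adj a b :=
  ⟨h1, h2⟩

lemma third_ne : ∀ i j : Fin 3, i ≠ j → third i j ≠ i ∧ third i j ≠ j := by decide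

end RC3Aux

open RC3Aux SimpleGraph in
theorem rc_commutingGraph_le_three_of_trivial_center (Γ : Type*) [Group Γ] [Finite Γ]
    (hna : ∃ a b : Γ, a * b ≠ b * a)
    (hz : Subgroup.center Γ = ⊥)
    (hord2 : {H : Subgroup Γ | IsMaximalAbelian H ∧ Nat.card H = 2}.ncard ≤ 3) :
    rainbowConnectionNumber (commutingGraph Γ) ≤ 3 := by
  classical
  obtain ⟨a, hinj, hwit⟩ := exists_coloring (pend_ncard_le hord2)
  apply Nat.sInf_le
  set fc : Γ → Γ → Fin 3 := fun x y =>
    if x = 1 then a y else if y = 1 then a x else third (a x) (a y) with hfc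
  have hsym : ∀ x y, fc x y = fc y x := by
    intro x y
    by_cases hx : x = 1 <;> by_cases hy : y = 1 <;> simp [hfc, hx, hy]
    exact third_symm _ _
  set c : Sym2 Γ → Fin 3 := Sym2.lift ⟨fc, hsym⟩ with hcdef
  have hceval : ∀ x y : Γ, c s(x, y) = fc x y := fun x y => Sym2.lift_mk ⟨fc, hsym⟩ x y
  refine ⟨c, ?_⟩
  have key : ∀ u v : Γ, u ≠ v → u * v ≠ v * u → a u = a v → ¬ Pend v →
      ∃ p : (commutingGraph Γ).Walk u v, p.IsPath ∧ (p.edges.map c).Nodup := by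
    intro u v huv hcomm hav hvp
    have hu1 : u ≠ 1 := by rintro rfl; exact hcomm (by group)
    have hv1 : v ≠ 1 := by rintro rfl; exact hcomm (by group)
    obtain ⟨x, hx1, hxv, hxc, hax⟩ := hwit v hv1 hvp
    have hxu : x ≠ u := by rintro rfl; exact hcomm hxc
    refine ⟨Walk.cons (cg_adj hu1 (by group) : (commutingGraph Γ).Adj u 1)
      (Walk.cons (cg_adj hx1.symm (by group) : (commutingGraph Γ).Adj 1 x)
        (Walk.cons (cg_adj hxv hxc : (commutingGraph Γ).Adj x v) Walk.nil)), ?_, ?_⟩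
    · rw [Walk.isPath_def]
      simp [hu1, huv, Ne.symm hxu, Ne.symm hx1, Ne.symm hv1, hxv]
    · have e1 : c s(u, 1) = a u := by rw [hceval]; simp [hfc, hu1]
      have e2 : c s(1, x) = a x := by rw [hceval]; simp [hfc]
      have e3 : c s(x, v) = third (a x) (a v) := by rw [hceval]; simp [hfc, hx1, hv1]
      obtain ⟨ht1, ht2⟩ := third_ne (a x) (a v) hax
      have d1 : a u ≠ a x := by rw [hav]; exact fun h => hax h.symm
      have d2 : a u ≠ third (a x) (a v) := by rw [hav]; exact fun h => ht2 h.symm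
      have d3 : a x ≠ third (a x) (a v) := fun h => ht1 h.symm
      simp [e1, e2, e3, d1, d2, d3]
  intro u v huv
  by_cases hcomm : u * v = v * u
  · refine ⟨Walk.cons (cg_adj huv hcomm : (commutingGraph Γ).Adj u v) Walk.nil, ?_, ?_⟩
    · rw [Walk.isPath_def]; simp [huv]
    · simp
  · have hu1 : u ≠ 1 := by rintro rfl; exact hcomm (by group)
    have hv1 : v ≠ 1 := by rintro rfl; exact hcomm (by group)
    by_cases hav : a u = a v
    · have hnp : ¬ Pend u ∨ ¬ Pend v := by
        by_contra h
        push_neg at h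
        exact (hinj.ne h.1 h.2 huv) hav
      rcases hnp with h | h
      · obtain ⟨p, hp1, hp2⟩ := key v u huv.symm (fun h' => hcomm h'.symm) hav.symm h
        exact ⟨p.reverse, hp1.reverse, by rwa [Walk.edges_reverse, List.map_reverse,
          List.nodup_reverse]⟩
      · exact key u v huv hcomm hav h
    · refine ⟨Walk.cons (cg_adj hu1 (by group) : (commutingGraph Γ).Adj u 1)
        (Walk.cons (cg_adj (fun h => hv1 h.symm) (by group) : (commutingGraph Γ).Adj 1 v) Walk.nil),
        ?_, ?_⟩
      · rw [Walk.isPath_def]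
        simp [hu1, huv, Ne.symm hv1]
      · have e1 : c s(u, 1) = a u := by rw [hceval]; simp [hfc, hu1]
        have e2 : c s(1, v) = a v := by rw [hceval]; simp [hfc]
        simp [e1, e2, hav]
end

section
/- If Γ is a finite non-abelian group that has at least four maximal abelian subgroups of order 2, then the rainbow connection number of the commuting graph CG(Γ) is at least 4. -/
/-- Elements of closure of a commuting pair commute. -/
lemma closure_pair_comm {Γ : Type*} [Group Γ] {x y : Γ} (hxy : x * y = y * x) :
    IsMulCommutative (Subgroup.closure ({x, y} : Set Γ)) := by
  have base : ∀ a ∈ ({x, y} : Set Γ), ∀ b ∈ ({x, y} : Set Γ), Commute a b := by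
    rintro a (rfl | rfl) b (rfl | rfl)
    · exact Commute.refl _
    · exact hxy
    · exact hxy.symm
    · exact Commute.refl _
  have step1 : ∀ a ∈ ({x, y} : Set Γ), ∀ b ∈ Subgroup.closure ({x, y} : Set Γ), Commute a b := by
    intro a ha b hb
    induction hb using Subgroup.closure_induction with
    | mem z hz => exact base a ha z hz
    | one => exact Commute.one_right a
    | mul u v _ _ hu hv => exact Commute.mul_right hu hv
    | inv u _ hu => exact Commute.inv_right hu
  have step2 : ∀ a ∈ Subgroup.closure ({x, y} : Set Γ),
      ∀ b ∈ Subgroup.closure ({x, y} : Set Γ), Commute a b := by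
    intro a ha b hb
    induction ha using Subgroup.closure_induction with
    | mem z hz => exact step1 z hz b hb
    | one => exact Commute.one_left b
    | mul u v _ _ hu hv => exact Commute.mul_left hu hv
    | inv u _ hu => exact Commute.inv_left hu
  exact ⟨⟨fun a b => Subtype.ext (step2 a a.2 b b.2)⟩⟩

/-- Structure of a maximal abelian subgroup of order 2. -/
lemma order_two_max_abelian {Γ : Type*} [Group Γ] {H : Subgroup Γ}
    (hH : IsMaximalAbelian H) (h2 : Nat.card H = 2) :
    ∃ x : Γ, x ≠ 1 ∧ x ∈ H ∧ (∀ z ∈ H, z = 1 ∨ z = x) ∧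
      (∀ y : Γ, x * y = y * x → y = 1 ∨ y = x) := by
  obtain ⟨b, hb, hbu⟩ := (Nat.card_eq_two_iff' (1 : H)).mp h2
  refine ⟨(b : Γ), ?_, b.2, ?_, ?_⟩
  · intro h; exact hb (Subtype.ext h)
  · intro z hz
    by_cases h1 : z = 1
    · exact Or.inl h1
    · right
      have : (⟨z, hz⟩ : H) = b := hbu ⟨z, hz⟩ (fun h => h1 (congrArg Subtype.val h))
      exact congrArg Subtype.val this
  · intro y hxy
    have hK := closure_pair_comm hxy
    have hle : H ≤ Subgroup.closure ({(b : Γ), y} : Set Γ) := by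
      intro z hz
      by_cases h1 : z = 1
      · rw [h1]; exact Subgroup.one_mem _
      · have : (⟨z, hz⟩ : H) = b := hbu ⟨z, hz⟩ (fun h => h1 (congrArg Subtype.val h))
        have : z = (b : Γ) := congrArg Subtype.val this
        rw [this]
        exact Subgroup.subset_closure (Set.mem_insert _ _)
    have hKH : Subgroup.closure ({(b : Γ), y} : Set Γ) = H := hH.2 _ hK hle
    have hyH : y ∈ H := hKH ▸ Subgroup.subset_closure (Set.mem_insert_of_mem _ rfl)
    by_cases h1 : y = 1
    · exact Or.inl h1
    · right
      have : (⟨y, hyH⟩ : H) = b := hbu ⟨y, hyH⟩ (fun h => h1 (congrArg Subtype.val h))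
      exact congrArg Subtype.val this

/-- Any walk in the commuting graph from a "leaf" involution contains the edge to 1. -/
lemma leaf_edge_mem {Γ : Type*} [Group Γ] {x v : Γ} (hx1 : x ≠ 1)
    (hx : ∀ y : Γ, x * y = y * x → y = 1 ∨ y = x)
    (p : (commutingGraph Γ).Walk x v) (hxv : x ≠ v) :
    s(x, (1 : Γ)) ∈ p.edges := by
  cases p with
  | nil => exact absurd rfl hxv
  | cons h q =>
    rename_i w
    have hw : w = 1 := by
      rcases hx w h.2 with h1 | h1
      · exact h1
      · exact absurd h1.symm h.1
    subst hw
    simp [SimpleGraph.Walk.edges_cons]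

theorem four_le_rc_commutingGraph (Γ : Type*) [Group Γ] [Finite Γ]
    (hna : ∃ a b : Γ, a * b ≠ b * a)
    (hord2 : 4 ≤ {H : Subgroup Γ | IsMaximalAbelian H ∧ Nat.card H = 2}.ncard) :
    4 ≤ rainbowConnectionNumber (commutingGraph Γ) := by
  set S := {H : Subgroup Γ | IsMaximalAbelian H ∧ Nat.card H = 2} with hS
  -- the defining set of the sInf is nonempty
  have hne : {k : ℕ | ∃ c : Sym2 Γ → Fin k,
      ∀ u v : Γ, u ≠ v → ∃ p : (commutingGraph Γ).Walk u v,
        p.IsPath ∧ (p.edges.map c).Nodup}.Nonempty := by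
    have : Finite (Sym2 Γ) := by infer_instance
    classical
    obtain ⟨n, ⟨e⟩⟩ := Finite.exists_equiv_fin (Sym2 Γ)
    refine ⟨n, e, ?_⟩
    intro u v huv
    by_cases hc : u * v = v * u
    · have hA : (commutingGraph Γ).Adj u v := ⟨huv, hc⟩
      refine ⟨SimpleGraph.Walk.cons hA SimpleGraph.Walk.nil, ?_, ?_⟩
      · simp [SimpleGraph.Walk.isPath_def]; exact huv
      · simp
    · have hu1 : u ≠ 1 := by rintro rfl; exact hc (by simp)
      have hv1 : v ≠ 1 := by rintro rfl; exact hc (by simp)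
      have hA : (commutingGraph Γ).Adj u 1 := ⟨hu1, by simp⟩
      have hB : (commutingGraph Γ).Adj 1 v := ⟨hv1.symm, by simp⟩
      refine ⟨SimpleGraph.Walk.cons hA
        (SimpleGraph.Walk.cons hB
          SimpleGraph.Walk.nil), ?_, ?_⟩
      · simp [SimpleGraph.Walk.isPath_def, List.nodup_cons]
        exact ⟨⟨hu1, huv⟩, hv1.symm⟩
      · simp only [SimpleGraph.Walk.edges_cons, SimpleGraph.Walk.edges_nil,
          List.map_cons, List.map_nil, List.nodup_cons, List.mem_singleton,
          List.not_mem_nil, not_false_iff, List.nodup_nil, and_true]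
        intro hcontra
        have := e.injective hcontra
        rw [Sym2.eq_iff] at this
        rcases this with ⟨h1, h2⟩ | ⟨h1, h2⟩
        · exact hu1 h1
        · exact huv h1
  unfold rainbowConnectionNumber
  obtain ⟨col, hcol⟩ := Nat.sInf_mem hne
  -- choose the involution for each subgroup in S
  classical
  have hchoice : ∀ H ∈ S, ∃ x : Γ, x ≠ 1 ∧ x ∈ H ∧ (∀ z ∈ H, z = 1 ∨ z = x) ∧
      (∀ y : Γ, x * y = y * x → y = 1 ∨ y = x) := fun H hH =>
    order_two_max_abelian hH.1 hH.2
  choose! xf hx1 hxH hxonly hxcomm using hchoice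
  -- the coloring map on S
  have hinj : Set.InjOn (fun H => col s(xf H, (1 : Γ))) S := by
    intro H hH H' hH' hcc
    by_contra hne'
    have hxne : xf H ≠ xf H' := by
      intro heq
      apply hne'
      apply le_antisymm
      · intro z hz
        rcases hxonly H hH z hz with rfl | rfl
        · exact H'.one_mem
        · rw [heq]; exact hxH H' hH'
      · intro z hz
        rcases hxonly H' hH' z hz with rfl | rfl
        · exact H.one_mem
        · rw [← heq]; exact hxH H hH
    obtain ⟨p, hp, hrain⟩ := hcol (xf H) (xf H') hxne
    have he1 : s(xf H, (1 : Γ)) ∈ p.edges :=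
      leaf_edge_mem (hx1 H hH) (hxcomm H hH) p hxne
    have he2 : s(xf H', (1 : Γ)) ∈ p.edges := by
      have := leaf_edge_mem (hx1 H' hH') (hxcomm H' hH') p.reverse hxne.symm
      rwa [SimpleGraph.Walk.edges_reverse, List.mem_reverse] at this
    have hedne : s(xf H, (1 : Γ)) ≠ s(xf H', (1 : Γ)) := by
      intro hcontra
      rw [Sym2.eq_iff] at hcontra
      rcases hcontra with ⟨h1, -⟩ | ⟨h1, h2⟩
      · exact hxne h1
      · exact hx1 H hH h1
    exact hedne (List.inj_on_of_nodup_map hrain he1 he2 hcc)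
  -- conclude by cardinality
  have h1 : Nat.card S ≤ Nat.card (Fin (sInf {k : ℕ | ∃ c : Sym2 Γ → Fin k,
      ∀ u v : Γ, u ≠ v → ∃ p : (commutingGraph Γ).Walk u v,
        p.IsPath ∧ (p.edges.map c).Nodup})) := by
    apply Nat.card_le_card_of_injective
      (fun H : S => col s(xf H.1, (1 : Γ)))
    intro a b hab
    exact Subtype.ext (hinj a.2 b.2 hab)
  rw [Nat.card_coe_set_eq, Nat.card_eq_fintype_card, Fintype.card_fin] at h1
  exact le_trans hord2 h1
end

section
/- Let Γ be a finite non-abelian group with |Z(Γ)| ≥ 2, and let 𝒞 be the collection of all maximal abelian subgroups of Γ. If |𝒞| ≤ 2^{|Z(Γ)|}, then the rainbow connection number of the commuting graph CG(Γ) equals 2. -/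
/-- Every element of a finite group lies in some maximal abelian subgroup. -/
lemma exists_isMaximalAbelian_mem {Γ : Type*} [Group Γ] [Finite Γ] (x : Γ) :
    ∃ H : Subgroup Γ, IsMaximalAbelian H ∧ x ∈ H := by
  have hfinsub : Finite (Subgroup Γ) :=
    Finite.of_injective (fun H : Subgroup Γ => (H : Set Γ)) SetLike.coe_injective
  set S : Set (Subgroup Γ) := {K : Subgroup Γ | IsMulCommutative K ∧ x ∈ K} with hS
  have hfin : S.Finite := Set.toFinite _
  have hne : S.Nonempty :=
    ⟨Subgroup.zpowers x, Subgroup.zpowers_isMulCommutative x, Subgroup.mem_zpowers x⟩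
  obtain ⟨H, hH, hmax⟩ := Set.Finite.exists_maximalFor id S hfin hne
  refine ⟨H, ⟨hH.1, fun K hK hHK => ?_⟩, hH.2⟩
  exact le_antisymm (hmax ⟨hK, hHK hH.2⟩ hHK) hHK

theorem rc_commutingGraph_eq_two (Γ : Type*) [Group Γ] [Finite Γ]
    (hna : ∃ a b : Γ, a * b ≠ b * a)
    (hz : 2 ≤ Nat.card (Subgroup.center Γ))
    (hcard : {H : Subgroup Γ | IsMaximalAbelian H}.ncard ≤
      2 ^ Nat.card (Subgroup.center Γ)) :
    rainbowConnectionNumber (commutingGraph Γ) = 2 := by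
  classical
  obtain ⟨a, b, hab⟩ := hna
  -- the set whose infimum we take
  set S : Set ℕ := {k : ℕ | ∃ c : Sym2 Γ → Fin k,
    ∀ u v : Γ, u ≠ v → ∃ p : (commutingGraph Γ).Walk u v,
      p.IsPath ∧ (p.edges.map c).Nodup} with hSdef
  -- choose a maximal abelian subgroup through each element
  choose M hM1 hM2 using (exists_isMaximalAbelian_mem (Γ := Γ))
  -- an injection from maximal abelian subgroups into functions center → Fin 2
  have hcard2 : Nat.card {H : Subgroup Γ | IsMaximalAbelian H} ≤
      Nat.card ((Subgroup.center Γ) → Fin 2) := by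
    rw [Nat.card_coe_set_eq, Nat.card_fun]
    simpa using hcard
  have hembne : Nonempty ({H : Subgroup Γ | IsMaximalAbelian H} ↪
      ((Subgroup.center Γ) → Fin 2)) := by
    haveI : Finite (Subgroup Γ) :=
      Finite.of_injective (fun H : Subgroup Γ => (H : Set Γ)) SetLike.coe_injective
    haveI : Fintype ↑{H : Subgroup Γ | IsMaximalAbelian H} := Fintype.ofFinite _
    haveI : Fintype (Subgroup.center Γ) := Fintype.ofFinite _
    refine Function.Embedding.nonempty_of_card_le ?_
    rw [← Nat.card_eq_fintype_card, ← Nat.card_eq_fintype_card]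
    exact hcard2
  obtain ⟨φ⟩ := hembne
  -- extend to all subgroups
  set ψ : Subgroup Γ → ((Subgroup.center Γ) → Fin 2) := fun H =>
    if h : IsMaximalAbelian H then φ ⟨H, h⟩ else fun _ => 0 with hψ
  set g : Γ → (Subgroup.center Γ) → Fin 2 := fun x => ψ (M x) with hg
  -- the edge coloring
  set f : Γ → Γ → Fin 2 := fun x y =>
    if hx : x ∈ Subgroup.center Γ then
      (if hy : y ∈ Subgroup.center Γ then 0 else g y ⟨x, hx⟩)
    else
      (if hy : y ∈ Subgroup.center Γ then g x ⟨y, hy⟩ else 0) with hf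
  have hfsymm : ∀ x y, f x y = f y x := by
    intro x y
    by_cases hx : x ∈ Subgroup.center Γ <;> by_cases hy : y ∈ Subgroup.center Γ <;>
      simp [hf, hx, hy]
  set c : Sym2 Γ → Fin 2 := Sym2.lift ⟨f, hfsymm⟩ with hc
  -- 2 is in the set
  have h2 : 2 ∈ S := by
    refine ⟨c, fun u v huv => ?_⟩
    by_cases hcomm : u * v = v * u
    · -- direct edge
      have hadj : (commutingGraph Γ).Adj u v := ⟨huv, hcomm⟩
      refine ⟨SimpleGraph.Walk.cons hadj SimpleGraph.Walk.nil, ?_, ?_⟩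
      · simp [SimpleGraph.Walk.isPath_def, huv]
      · simp
    · -- both are non-central; go through a central element
      have hu : u ∉ Subgroup.center Γ := fun h => hcomm ((Subgroup.mem_center_iff.mp h v).symm)
      have hv : v ∉ Subgroup.center Γ := fun h => hcomm (Subgroup.mem_center_iff.mp h u)
      have hMne : M u ≠ M v := by
        intro h
        have : ∀ x y : Γ, x ∈ M u → y ∈ M u → x * y = y * x := by
          intro x y hx hy
          haveI : IsMulCommutative (M u) := (hM1 u).1
          exact Subgroup.mul_comm_of_mem_isMulCommutative (H := M u) hx hy
        exact hcomm (this u v (hM2 u) (h ▸ hM2 v))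
      have hgne : g u ≠ g v := by
        intro h
        apply hMne
        have h1 : ψ (M u) = φ ⟨M u, hM1 u⟩ := dif_pos (hM1 u)
        have h2 : ψ (M v) = φ ⟨M v, hM1 v⟩ := dif_pos (hM1 v)
        have := φ.injective (h1.symm.trans (h.trans h2))
        exact congrArg Subtype.val this
      obtain ⟨z, hzne⟩ : ∃ z : Subgroup.center Γ, g u z ≠ g v z := by
        by_contra h
        push_neg at h
        exact hgne (funext h)
      have hzu : (z : Γ) ≠ u := fun h => hu (h ▸ z.2)
      have hzv : (z : Γ) ≠ v := fun h => hv (h ▸ z.2)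
      have hadj1 : (commutingGraph Γ).Adj u (z : Γ) :=
        ⟨hzu.symm, Subgroup.mem_center_iff.mp z.2 u⟩
      have hadj2 : (commutingGraph Γ).Adj (z : Γ) v :=
        ⟨hzv, (Subgroup.mem_center_iff.mp z.2 v).symm⟩
      refine ⟨SimpleGraph.Walk.cons hadj1 (SimpleGraph.Walk.cons hadj2 SimpleGraph.Walk.nil),
        ?_, ?_⟩
      · simp [SimpleGraph.Walk.isPath_def, List.nodup_cons, hzu, hzv, huv,
          hzu.symm, hzv.symm]
      · have e1 : c (s(u, (z : Γ))) = g u z := by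
          simp only [hc, Sym2.lift_mk, hf]
          rw [dif_neg hu, dif_pos z.2]
        have e2 : c (s((z : Γ), v)) = g v z := by
          simp only [hc, Sym2.lift_mk, hf]
          rw [dif_pos z.2, dif_neg hv]
        simp [e1, e2, hzne]
  -- 0 is not in the set
  have h0 : 0 ∉ S := by
    rintro ⟨c0, -⟩
    exact (c0 s(a, a)).elim0
  -- 1 is not in the set
  have h1 : 1 ∉ S := by
    rintro ⟨c1, hc1⟩
    have hne : a ≠ b := fun h => hab (by rw [h])
    obtain ⟨p, hp, hnd⟩ := hc1 a b hne
    have hlen : p.length ≤ 1 := by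
      have := hnd.length_le_card
      simpa [SimpleGraph.Walk.length_edges] using this
    cases p with
    | nil => exact hne rfl
    | cons h q =>
      cases q with
      | nil => exact hab h.2
      | cons h' q' => simp at hlen
  -- conclude
  have hSne : S.Nonempty := ⟨2, h2⟩
  have hmem := Nat.sInf_mem hSne
  refine le_antisymm (Nat.sInf_le h2) ?_
  rcases Nat.lt_or_ge (sInf S) 2 with h | h
  · interval_cases hval : sInf S
    · exact absurd (hval ▸ hmem) h0
    · exact absurd (hval ▸ hmem) h1
  · exact h
end

section
/- Let Γ be a finite non-abelian group with nontrivial center Z(Γ), let 𝒞 be the collection of all maximal abelian subgroups of Γ, and suppose the intersection of every two distinct members of 𝒞 equals Z(Γ). Then the rainbow connection number of the commuting graph CG(Γ) equals 2 if and only if |𝒞| ≤ 2^{|Z(Γ)|}. -/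
section Aux

variable {Γ : Type*} [Group Γ]

/-- The closure of a set of pairwise commuting elements is commutative. -/
lemma closure_isComm (S : Set Γ) (h : ∀ x ∈ S, ∀ y ∈ S, x * y = y * x) :
    IsMulCommutative (Subgroup.closure S) := by
  have key : ∀ g ∈ S, Subgroup.closure S ≤ Subgroup.centralizer {g} := by
    intro g hg
    rw [Subgroup.closure_le]
    intro s hs
    rw [SetLike.mem_coe, Subgroup.mem_centralizer_iff]
    intro j hj
    rw [Set.mem_singleton_iff] at hj
    rw [hj]
    exact h g hg s hs
  have key2 : Subgroup.closure S ≤ Subgroup.centralizer (Subgroup.closure S : Set Γ) := by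
    rw [Subgroup.closure_le]
    intro g hg
    rw [SetLike.mem_coe, Subgroup.mem_centralizer_iff]
    intro x hx
    rw [SetLike.mem_coe] at hx
    have hx' := key g hg hx
    rw [Subgroup.mem_centralizer_iff] at hx'
    exact (hx' g (Set.mem_singleton g)).symm
  refine ⟨⟨fun a b => ?_⟩⟩
  apply Subtype.ext
  have h2 := key2 a.2
  rw [Subgroup.mem_centralizer_iff] at h2
  have := h2 (b : Γ) (by exact_mod_cast b.2)
  exact this.symm

lemma exists_maxAbelian_ge [Finite Γ] (H : Subgroup Γ) (hH : IsMulCommutative H) :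
    ∃ M, IsMaximalAbelian M ∧ H ≤ M := by
  haveI : Finite (Subgroup Γ) :=
    Finite.of_injective (fun K : Subgroup Γ => (K : Set Γ)) SetLike.coe_injective
  obtain ⟨M, hM, hmax⟩ := Set.Finite.exists_maximalFor id
    {K : Subgroup Γ | IsMulCommutative K ∧ H ≤ K} (Set.toFinite _) ⟨H, hH, le_refl H⟩
  exact ⟨M, ⟨hM.1, fun K hK hMK => le_antisymm (hmax ⟨hK, le_trans hM.2 hMK⟩ hMK) hMK⟩, hM.2⟩

lemma exists_max_mem_mem [Finite Γ] {a b : Γ} (h : a * b = b * a) :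
    ∃ M, IsMaximalAbelian M ∧ a ∈ M ∧ b ∈ M := by
  have hc : IsMulCommutative (Subgroup.closure ({a, b} : Set Γ)) := by
    apply closure_isComm
    intro x hx y hy
    simp only [Set.mem_insert_iff, Set.mem_singleton_iff] at hx hy
    rcases hx with rfl | rfl <;> rcases hy with rfl | rfl
    · rfl
    · exact h
    · exact h.symm
    · rfl
  obtain ⟨M, hM, hle⟩ := exists_maxAbelian_ge _ hc
  exact ⟨M, hM, hle (Subgroup.subset_closure (Set.mem_insert a _)),
    hle (Subgroup.subset_closure (Set.mem_insert_of_mem _ rfl))⟩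

lemma center_le_maxAbelian {M : Subgroup Γ} (hM : IsMaximalAbelian M) :
    Subgroup.center Γ ≤ M := by
  intro z hz
  have hcomm : IsMulCommutative (Subgroup.closure ((M : Set Γ) ∪ {z})) := by
    apply closure_isComm
    intro x hx y hy
    rcases hx with hx | hx
    · rcases hy with hy | hy
      · exact haveI := hM.1; Subgroup.mul_comm_of_mem_isMulCommutative M hx hy
      · rw [Set.mem_singleton_iff] at hy; subst hy
        exact Subgroup.mem_center_iff.mp hz x
    · rw [Set.mem_singleton_iff] at hx; subst hx
      exact (Subgroup.mem_center_iff.mp hz y).symm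
  have hle : M ≤ Subgroup.closure ((M : Set Γ) ∪ {z}) :=
    fun m hm => Subgroup.subset_closure (Or.inl hm)
  have heq := hM.2 _ hcomm hle
  have : z ∈ Subgroup.closure ((M : Set Γ) ∪ {z}) :=
    Subgroup.subset_closure (Or.inr rfl)
  rwa [heq] at this

lemma exists_noncentral (hna : ∃ a b : Γ, a * b ≠ b * a) {M : Subgroup Γ}
    (hM : IsMaximalAbelian M) : ∃ x, x ∈ M ∧ x ∉ Subgroup.center Γ := by
  obtain ⟨a, b, hab⟩ := hna
  by_contra hcon
  push_neg at hcon
  have haZ : a ∉ Subgroup.center Γ := fun h => hab (Subgroup.mem_center_iff.mp h b).symm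
  have hcomm : IsMulCommutative (Subgroup.closure ((Subgroup.center Γ : Set Γ) ∪ {a})) := by
    apply closure_isComm
    intro x hx y hy
    rcases hx with hx | hx
    · exact (Subgroup.mem_center_iff.mp hx y).symm
    · rw [Set.mem_singleton_iff] at hx; subst hx
      rcases hy with hy | hy
      · exact Subgroup.mem_center_iff.mp hy x
      · rw [Set.mem_singleton_iff] at hy; subst hy; rfl
  have hle : M ≤ Subgroup.closure ((Subgroup.center Γ : Set Γ) ∪ {a}) :=
    fun m hm => Subgroup.subset_closure (Or.inl (hcon m hm))
  have heq := hM.2 _ hcomm hle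
  have haM : a ∈ M := by
    have : a ∈ Subgroup.closure ((Subgroup.center Γ : Set Γ) ∪ {a}) :=
      Subgroup.subset_closure (Or.inr rfl)
    rwa [heq] at this
  exact haZ (hcon a haM)


lemma walk_two {V : Type*} {G : SimpleGraph V} {a b : V} (p : G.Walk a b)
    (hlen : p.length ≤ 2) (hnadj : ¬ G.Adj a b) (hne : a ≠ b) :
    ∃ w, G.Adj a w ∧ G.Adj w b ∧ p.edges = [s(a, w), s(w, b)] := by
  cases p with
  | nil => exact absurd rfl hne
  | cons h q =>
    cases q with
    | nil => exact absurd h hnadj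
    | cons h' q' =>
      cases q' with
      | nil => exact ⟨_, h, h', by simp⟩
      | cons h'' q'' => simp [SimpleGraph.Walk.length_cons] at hlen

end Aux

theorem rc_commutingGraph_eq_two_iff (Γ : Type*) [Group Γ] [Finite Γ]
    (hna : ∃ a b : Γ, a * b ≠ b * a)
    (hz : Subgroup.center Γ ≠ ⊥)
    (hint : ∀ K L : Subgroup Γ, IsMaximalAbelian K → IsMaximalAbelian L → K ≠ L →
      (K : Set Γ) ∩ (L : Set Γ) = (Subgroup.center Γ : Set Γ)) :
    rainbowConnectionNumber (commutingGraph Γ) = 2 ↔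
      {H : Subgroup Γ | IsMaximalAbelian H}.ncard ≤
        2 ^ Nat.card (Subgroup.center Γ) := by
  classical
  obtain ⟨a0, b0, hab0⟩ := hna
  set Z := Subgroup.center Γ with hZdef
  set 𝒞 := {H : Subgroup Γ | IsMaximalAbelian H} with hCdef
  set S := {k : ℕ | ∃ c : Sym2 Γ → Fin k,
    ∀ u v : Γ, u ≠ v → ∃ p : (commutingGraph Γ).Walk u v,
      p.IsPath ∧ (p.edges.map c).Nodup} with hSdef
  -- membership in two distinct maximal abelians forces centrality
  have mem2 : ∀ {A B : Subgroup Γ}, IsMaximalAbelian A → IsMaximalAbelian B → A ≠ B →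
      ∀ {x : Γ}, x ∈ A → x ∈ B → x ∈ Z := by
    intro A B hA hB hAB x hxA hxB
    have : x ∈ (A : Set Γ) ∩ (B : Set Γ) := ⟨hxA, hxB⟩
    rw [hint A B hA hB hAB] at this
    exact this
  -- a common neighbor of two noncommuting elements is central
  have commonZ : ∀ {a b w : Γ}, a * b ≠ b * a → w * a = a * w → w * b = b * w → w ∈ Z := by
    intro a b w hab h1 h2
    obtain ⟨M, hM, hwM, haM⟩ := exists_max_mem_mem h1
    obtain ⟨N, hN, hwN, hbN⟩ := exists_max_mem_mem h2
    have hMN : M ≠ N := by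
      rintro rfl
      exact hab (haveI := hM.1; Subgroup.mul_comm_of_mem_isMulCommutative M haM hbN)
    exact mem2 hM hN hMN hwM hwN
  -- noncentral elements of distinct maximal abelians don't commute
  have notcomm : ∀ {A B : Subgroup Γ}, IsMaximalAbelian A → IsMaximalAbelian B → A ≠ B →
      ∀ {a b : Γ}, a ∈ A → b ∈ B → a ∉ Z → b ∉ Z → a * b ≠ b * a := by
    intro A B hA hB hAB a b haA hbB haZ hbZ h
    obtain ⟨M, hM, haM, hbM⟩ := exists_max_mem_mem h
    have hAM : A = M := by
      by_contra hne
      exact haZ (mem2 hA hM hne haA haM)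
    have hBM : B = M := by
      by_contra hne
      exact hbZ (mem2 hB hM hne hbB hbM)
    exact hAB (hAM.trans hBM.symm)
  have h0 : 0 ∉ S := by
    rintro ⟨c, -⟩
    exact Fin.elim0 (c s(a0, a0))
  have hne0 : a0 ≠ b0 := fun h => hab0 (by rw [h])
  have h1 : 1 ∉ S := by
    rintro ⟨c, hc⟩
    obtain ⟨p, hp, hnd⟩ := hc a0 b0 hne0
    have hlen : p.length ≤ 1 := by
      have := List.Nodup.length_le_card hnd
      simpa [SimpleGraph.Walk.length_edges] using this
    cases p with
    | nil => exact hne0 rfl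
    | cons h q =>
      cases q with
      | nil => exact hab0 h.2
      | cons h' q' => simp [SimpleGraph.Walk.length_cons] at hlen
  -- forward: a 2-coloring gives the bound
  have fwd : 2 ∈ S → 𝒞.ncard ≤ 2 ^ Nat.card Z := by
    rintro ⟨c, hc⟩
    have hxex : ∀ H : ↥𝒞, ∃ x, x ∈ H.1 ∧ x ∉ Z :=
      fun H => exists_noncentral ⟨a0, b0, hab0⟩ H.2
    choose x hx1 hx2 using hxex
    have hginj : Function.Injective
        (fun H : ↥𝒞 => fun z : ↥Z => c s(x H, (z : Γ))) := by
      intro H K hgHK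
      by_contra hHK
      have hvalne : H.1 ≠ K.1 := fun h => hHK (Subtype.ext h)
      have hab : x H * x K ≠ x K * x H :=
        notcomm H.2 K.2 hvalne (hx1 H) (hx1 K) (hx2 H) (hx2 K)
      have hne : x H ≠ x K := fun h => hab (by rw [h])
      obtain ⟨p, hp, hnd⟩ := hc (x H) (x K) hne
      have hlen : p.length ≤ 2 := by
        have := List.Nodup.length_le_card hnd
        simpa [SimpleGraph.Walk.length_edges] using this
      have hnadj : ¬ (commutingGraph Γ).Adj (x H) (x K) := fun hadj => hab hadj.2
      obtain ⟨w, h, h', hedges⟩ := walk_two p hlen hnadj hne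
      have hwZ : w ∈ Z := commonZ hab h.2.symm h'.2
      have hcol : c s(x H, w) = c s(x K, w) := congrFun hgHK ⟨w, hwZ⟩
      have hswap : c s(w, x K) = c s(x K, w) := by rw [Sym2.eq_swap]
      rw [hedges] at hnd
      simp only [List.map_cons, List.map_nil] at hnd
      have hnd1 := (List.nodup_cons.mp hnd).1
      exact hnd1 (by simp [hcol.trans hswap.symm])
    calc 𝒞.ncard = Nat.card ↥𝒞 := (Nat.card_coe_set_eq 𝒞).symm
      _ ≤ Nat.card (↥Z → Fin 2) := Nat.card_le_card_of_injective _ hginj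
      _ = 2 ^ Nat.card Z := by rw [Nat.card_fun]; norm_num
  -- backward: the bound gives a good 2-coloring
  have bwd : 𝒞.ncard ≤ 2 ^ Nat.card Z → 2 ∈ S := by
    intro hcard
    -- choose for every element a maximal abelian subgroup containing it
    have hex : ∀ g : Γ, ∃ M, IsMaximalAbelian M ∧ g ∈ M := by
      intro g
      obtain ⟨M, hM, hg, -⟩ := exists_max_mem_mem (rfl : g * g = g * g)
      exact ⟨M, hM, hg⟩
    choose A hA hmemA using hex
    -- an injection 𝒞 ↪ (Z → Fin 2)
    haveI : Finite (Subgroup Γ) :=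
      Finite.of_injective (fun K : Subgroup Γ => (K : Set Γ)) SetLike.coe_injective
    haveI : Fintype ↥𝒞 := Fintype.ofFinite _
    haveI : Fintype (↥Z → Fin 2) := Fintype.ofFinite _
    have hcard' : Fintype.card ↥𝒞 ≤ Fintype.card (↥Z → Fin 2) := by
      rw [← Nat.card_eq_fintype_card, ← Nat.card_eq_fintype_card,
        Nat.card_coe_set_eq, Nat.card_fun]
      simpa using hcard
    obtain ⟨v⟩ := Function.Embedding.nonempty_of_card_le hcard'
    -- the coloring
    set f : Γ → Γ → Fin 2 := fun a b =>
      if ha : a ∈ Z then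
        (if hb : b ∈ Z then 0 else v ⟨A b, hA b⟩ ⟨a, ha⟩)
      else
        (if hb : b ∈ Z then v ⟨A a, hA a⟩ ⟨b, hb⟩ else 0) with hfdef
    have hfsymm : ∀ a b : Γ, f a b = f b a := by
      intro a b
      by_cases ha : a ∈ Z <;> by_cases hb : b ∈ Z <;>
        simp [hfdef, ha, hb]
    set c : Sym2 Γ → Fin 2 := Sym2.lift ⟨f, hfsymm⟩ with hcdef
    refine ⟨c, ?_⟩
    intro u w huw
    by_cases hcomm : u * w = w * u
    · exact ⟨SimpleGraph.Walk.cons (⟨huw, hcomm⟩ : (commutingGraph Γ).Adj u w) SimpleGraph.Walk.nil,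
        SimpleGraph.Walk.IsPath.cons SimpleGraph.Walk.IsPath.nil (by simp [huw]),
        List.nodup_singleton _⟩
    · have huZ : u ∉ Z := fun h => hcomm (Subgroup.mem_center_iff.mp h w).symm
      have hwZ : w ∉ Z := fun h => hcomm (Subgroup.mem_center_iff.mp h u)
      have hAne : A u ≠ A w := by
        intro h
        apply hcomm
        exact haveI := (hA u).1
          Subgroup.mul_comm_of_mem_isMulCommutative (A u) (hmemA u) (h ▸ hmemA w)
      have hvne : v ⟨A u, hA u⟩ ≠ v ⟨A w, hA w⟩ := by
        intro h
        exact hAne (congrArg Subtype.val (v.injective h))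
      obtain ⟨z0, hz0⟩ := Function.ne_iff.mp hvne
      have hzZ : (z0 : Γ) ∈ Z := z0.2
      have huz : u ≠ (z0 : Γ) := fun h => huZ (h ▸ hzZ)
      have hzw : (z0 : Γ) ≠ w := fun h => hwZ (h ▸ hzZ)
      have hadj1 : (commutingGraph Γ).Adj u (z0 : Γ) :=
        ⟨huz, Subgroup.mem_center_iff.mp hzZ u⟩
      have hadj2 : (commutingGraph Γ).Adj (z0 : Γ) w :=
        ⟨hzw, (Subgroup.mem_center_iff.mp hzZ w).symm⟩
      refine ⟨SimpleGraph.Walk.cons hadj1 (SimpleGraph.Walk.cons hadj2 SimpleGraph.Walk.nil),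
        ?_, ?_⟩
      · rw [SimpleGraph.Walk.isPath_def]
        simp [huz, huw, hzw]
      · have e1 : c s(u, (z0 : Γ)) = v ⟨A u, hA u⟩ z0 := by
          show f u (z0 : Γ) = _
          rw [hfdef]
          simp only [dif_neg huZ, dif_pos hzZ]
        have e2 : c s((z0 : Γ), w) = v ⟨A w, hA w⟩ z0 := by
          show f (z0 : Γ) w = _
          rw [hfdef]
          simp only [dif_pos hzZ, dif_neg hwZ]
        simp only [SimpleGraph.Walk.edges_cons, SimpleGraph.Walk.edges_nil,
          List.map_cons, List.map_nil]
        refine List.nodup_cons.mpr ⟨?_, List.nodup_singleton _⟩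
        rw [List.mem_singleton, e1, e2]
        exact hz0
  have hrc : rainbowConnectionNumber (commutingGraph Γ) = sInf S := rfl
  rw [hrc]
  constructor
  · intro hsinf
    apply fwd
    have hSne : S.Nonempty := by
      by_contra h
      rw [Set.not_nonempty_iff_eq_empty] at h
      rw [h, Nat.sInf_empty] at hsinf
      exact two_ne_zero hsinf.symm
    have := Nat.sInf_mem hSne
    rwa [hsinf] at this
  · intro hcard
    have h2 := bwd hcard
    have hle := Nat.sInf_le h2
    have hmem := Nat.sInf_mem ⟨2, h2⟩
    have hne0' : sInf S ≠ 0 := fun h => h0 (h ▸ hmem)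
    have hne1 : sInf S ≠ 1 := fun h => h1 (h ▸ hmem)
    omega
end

section
/- For every integer n ≥ 4, the rainbow connection number of the commuting graph of the generalized quaternion (dicyclic) group Q_{4n} of order 4n equals 3. -/
namespace RCQuatAux

open QuaternionGroup

variable {n : ℕ}

lemma cast_inj_lt (hn : 0 < n) {a b : ℕ} (ha : a < 2*n) (hb : b < 2*n)
    (h : (a : ZMod (2*n)) = (b : ZMod (2*n))) : a = b := by
  have := congrArg ZMod.val h
  rwa [ZMod.val_natCast_of_lt ha, ZMod.val_natCast_of_lt hb] at this

lemma two_torsion (hn : 0 < n) {j : ZMod (2*n)} (h : j + j = 0) :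
    j = 0 ∨ j = (n : ZMod (2*n)) := by
  haveI : NeZero (2*n) := ⟨by omega⟩
  have hv : (j + j).val = 0 := by rw [h]; simp
  rw [ZMod.val_add] at hv
  have hj := ZMod.val_lt j
  obtain ⟨t, ht⟩ := Nat.dvd_of_mod_eq_zero hv
  have hvals : j.val = 0 ∨ j.val = n := by
    rcases Nat.lt_or_ge t 2 with h2 | h2
    · interval_cases t <;> omega
    · have : 2*n*2 ≤ 2*n*t := Nat.mul_le_mul_left _ h2
      omega
  rcases hvals with h0 | hn'
  · left
    exact (ZMod.val_eq_zero j).1 h0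
  · right
    apply ZMod.val_injective
    rw [hn', ZMod.val_natCast_of_lt (by omega)]

lemma n_ne_zero (hn : 0 < n) : (n : ZMod (2*n)) ≠ 0 := by
  intro h
  have := cast_inj_lt hn (a := n) (b := 0) (by omega) (by omega) (by simpa using h)
  omega

lemma nn_zero : (n : ZMod (2*n)) + (n : ZMod (2*n)) = 0 := by
  have : ((n : ℕ) + n : ℕ) = 2*n := by ring
  rw [← Nat.cast_add, this, ZMod.natCast_self]

lemma a0_comm (x : QuaternionGroup n) : a 0 * x = x * a 0 := by
  rcases x with j | j <;> simp [add_comm]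

lemma an_comm (x : QuaternionGroup n) : a (n : ZMod (2*n)) * x = x * a (n : ZMod (2*n)) := by
  rcases x with j | j
  · simp [add_comm]
  · simp only [a_mul_xa, xa_mul_a, xa.injEq]
    have := nn_zero (n := n)
    linear_combination -this

lemma a_comm_xa_iff (m j : ZMod (2*n)) :
    a m * xa j = xa j * a m ↔ m + m = 0 := by
  simp only [a_mul_xa, xa_mul_a, xa.injEq]
  constructor
  · intro h; linear_combination -h
  · intro h; linear_combination -h

lemma xa_comm_xa_iff (hn : 0 < n) (i j : ZMod (2*n)) :
    xa i * xa j = xa j * xa i ↔ j = i ∨ j = i + (n : ZMod (2*n)) := by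
  simp only [xa_mul_xa, a.injEq]
  constructor
  · intro h
    have h2 : (j - i) + (j - i) = 0 := by linear_combination h
    rcases two_torsion hn h2 with h0 | hne
    · left; linear_combination h0
    · right; linear_combination hne
  · rintro (rfl | rfl)
    · rfl
    · have := nn_zero (n := n)
      linear_combination this

lemma two_cast_ne_zero (hn : 4 ≤ n) : (1 : ZMod (2*n)) + 1 ≠ 0 := by
  have : ((2:ℕ) : ZMod (2*n)) ≠ ((0:ℕ) : ZMod (2*n)) := by
    intro h
    have := cast_inj_lt (by omega) (by omega) (by omega) h
    omega
  intro h
  apply this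
  push_cast
  linear_combination h

/-- extraction of a length-2 rainbow path with 2 colors -/
lemma exists_mid {V : Type*} {G : SimpleGraph V} (c : Sym2 V → Fin 2) {u v : V}
    (hne : u ≠ v) (hadj : ¬ G.Adj u v)
    (p : G.Walk u v) (hnd : (p.edges.map c).Nodup) :
    ∃ w, G.Adj u w ∧ G.Adj w v ∧ c s(u, w) ≠ c s(w, v) := by
  have hlen : p.length ≤ 2 := by
    have h1 : (p.edges.map c).length ≤ 2 := by
      simpa using hnd.length_le_card
    simpa using h1
  cases p with
  | nil => exact absurd rfl hne
  | cons h q =>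
    rename_i w
    cases q with
    | nil => exact absurd h hadj
    | cons h' q' =>
      rename_i w'
      cases q' with
      | nil =>
        refine ⟨w, h, h', ?_⟩
        simp only [SimpleGraph.Walk.edges_cons, SimpleGraph.Walk.edges_nil,
          List.map_cons, List.map_nil, List.nodup_cons, List.mem_cons,
          List.not_mem_nil, or_false, List.nodup_nil, and_true] at hnd
        exact hnd.1
      | cons h'' q'' =>
        simp only [SimpleGraph.Walk.length_cons] at hlen
        omega

end RCQuatAux

open QuaternionGroup RCQuatAux in
theorem rc_commutingGraph_quaternionGroup (n : ℕ) (hn : 4 ≤ n) :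
    rainbowConnectionNumber (commutingGraph (QuaternionGroup n)) = 3 := by
  classical
  have hn0 : 0 < n := by omega
  set Γ := QuaternionGroup n with hΓ
  set G := commutingGraph Γ with hG
  set S := {k : ℕ | ∃ c : Sym2 Γ → Fin k,
    ∀ u v : Γ, u ≠ v → ∃ p : G.Walk u v, p.IsPath ∧ (p.edges.map c).Nodup} with hS
  -- central elements are adjacent to everything
  have hA0 : ∀ x : Γ, x ≠ a 0 → G.Adj x (a 0) := fun x hx => ⟨hx, (a0_comm x).symm⟩
  have hAn : ∀ x : Γ, x ≠ a (n : ZMod (2*n)) → G.Adj (a (n : ZMod (2*n))) x :=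
    fun x hx => ⟨fun h => hx h.symm, an_comm x⟩
  have h0n : (a 0 : Γ) ≠ a (n : ZMod (2*n)) := by
    intro h
    injection h with h
    exact n_ne_zero hn0 h.symm
  -- upper bound: 3 ∈ S
  have h3 : 3 ∈ S := by
    refine ⟨fun s => if (a 0 : Γ) ∈ s then (if (a (n : ZMod (2*n)) : Γ) ∈ s then 1 else 0)
      else if (a (n : ZMod (2*n)) : Γ) ∈ s then 2 else 0, ?_⟩
    intro u v huv
    by_cases hadj : G.Adj u v
    · exact ⟨SimpleGraph.Walk.cons hadj SimpleGraph.Walk.nil,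
        by simp [SimpleGraph.Walk.cons_isPath_iff, huv], by simp⟩
    · -- u, v are not central
      have hu0 : u ≠ a 0 := by
        rintro rfl
        exact hadj ((G.adj_symm (hA0 v (fun h => huv h.symm))))
      have hun : u ≠ a (n : ZMod (2*n)) := by
        rintro rfl
        exact hadj (hAn v (fun h => huv h.symm))
      have hv0 : v ≠ a 0 := by
        rintro rfl
        exact hadj (hA0 u huv)
      have hvn : v ≠ a (n : ZMod (2*n)) := by
        rintro rfl
        exact hadj (G.adj_symm (hAn u huv))
      have hadj0n : G.Adj (a 0) (a (n : ZMod (2*n))) := ⟨h0n, (an_comm (a 0)).symm⟩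
      refine ⟨SimpleGraph.Walk.cons (hA0 u hu0)
        (SimpleGraph.Walk.cons hadj0n
          (SimpleGraph.Walk.cons (hAn v hvn) SimpleGraph.Walk.nil)), ?_, ?_⟩
      · rw [SimpleGraph.Walk.isPath_def]
        simp only [SimpleGraph.Walk.support_cons, SimpleGraph.Walk.support_nil]
        refine List.nodup_cons.2 ⟨?_, List.nodup_cons.2 ⟨?_, List.nodup_cons.2
          ⟨?_, List.nodup_singleton _⟩⟩⟩
        · simp only [List.mem_cons, List.not_mem_nil, or_false, List.mem_singleton]
          push_neg
          exact ⟨hu0, hun, huv⟩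
        · simp only [List.mem_cons, List.not_mem_nil, or_false, List.mem_singleton]
          push_neg
          exact ⟨h0n, fun h => hv0 h.symm⟩
        · simp only [List.mem_singleton]
          exact Ne.symm hvn
      · simp only [SimpleGraph.Walk.edges_cons, SimpleGraph.Walk.edges_nil,
          List.map_cons, List.map_nil]
        have e1 : ¬ (a (n : ZMod (2*n)) : Γ) ∈ s(u, a 0) := by
          simp only [Sym2.mem_iff]
          push_neg
          exact ⟨fun h => hun h.symm, fun h => h0n h.symm⟩
        have e2 : ¬ (a 0 : Γ) ∈ s(a (n : ZMod (2*n)), v) := by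
          simp only [Sym2.mem_iff]
          push_neg
          exact ⟨h0n, fun h => hv0 h.symm⟩
        rw [if_pos (by simp), if_neg e1, if_pos (by simp), if_pos (by simp),
          if_neg e2, if_pos (by simp)]
        simp
  -- lower bound
  have hlow : ∀ k ∈ S, 3 ≤ k := by
    intro k hk
    by_contra hlt
    push_neg at hlt
    obtain ⟨c, hc⟩ := hk
    set c' : Sym2 Γ → Fin 2 := fun s => Fin.castLE (by omega) (c s) with hc'def
    have hc2 : ∀ u v : Γ, u ≠ v →
        ∃ p : G.Walk u v, (p.edges.map c').Nodup := by
      intro u v huv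
      obtain ⟨p, _, hnd⟩ := hc u v huv
      refine ⟨p, ?_⟩
      have : p.edges.map c' = (p.edges.map c).map (Fin.castLE (by omega)) := by
        rw [List.map_map]; rfl
      rw [this]
      exact hnd.map (Fin.castLE_injective _)
    have key : ∀ u v : Γ, u ≠ v → ¬ G.Adj u v →
        ∃ w, G.Adj u w ∧ G.Adj w v ∧ c' s(u, w) ≠ c' s(w, v) := by
      intro u v huv hadj
      obtain ⟨p, hnd⟩ := hc2 u v huv
      exact exists_mid c' huv hadj p hnd
    -- the injection F
    set F : Fin 4 → Fin 2 × Fin 2 := fun k =>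
      (c' s(xa ((k : ℕ) : ZMod (2*n)), a 0), c' s(xa ((k : ℕ) : ZMod (2*n)), a (n : ZMod (2*n))))
      with hF
    have castne : ∀ k l : Fin 4, k ≠ l →
        ((k : ℕ) : ZMod (2*n)) ≠ ((l : ℕ) : ZMod (2*n)) := by
      intro k l hkl h
      exact hkl (Fin.ext (cast_inj_lt hn0 (by omega) (by omega) h))
    have castne' : ∀ k l : Fin 4,
        ((l : ℕ) : ZMod (2*n)) ≠ ((k : ℕ) : ZMod (2*n)) + (n : ZMod (2*n)) := by
      intro k l h
      have h2 : ((l : ℕ) : ZMod (2*n)) = (((k : ℕ) + n : ℕ) : ZMod (2*n)) := by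
        push_cast; linear_combination h
      have := cast_inj_lt hn0 (a := (l : ℕ)) (b := (k : ℕ) + n) (by omega) (by omega) h2
      omega
    have hFinj : Function.Injective F := by
      intro k l hkl
      by_contra hne
      have hne' : (xa ((k : ℕ) : ZMod (2*n)) : Γ) ≠ xa ((l : ℕ) : ZMod (2*n)) := by
        intro h
        exact castne k l hne (by injection h)
      have hnadj : ¬ G.Adj (xa ((k : ℕ) : ZMod (2*n))) (xa ((l : ℕ) : ZMod (2*n))) := by
        rintro ⟨-, hcomm⟩
        rcases (xa_comm_xa_iff hn0 _ _).1 hcomm with h | h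
        · exact castne k l hne h.symm
        · exact castne' k l h
      obtain ⟨w, ⟨hwu, hcu⟩, ⟨hwv, hcv⟩, hcol⟩ := key _ _ hne' hnadj
      rcases w with m | m
      · -- w = a m
        have hm : m + m = 0 := (a_comm_xa_iff m _).1 hcu.symm
        rcases two_torsion hn0 hm with rfl | rfl
        · apply hcol
          rw [show (s(a 0, xa ((l : ℕ) : ZMod (2*n))) : Sym2 Γ)
              = s(xa ((l : ℕ) : ZMod (2*n)), a 0) from Sym2.eq_swap]
          exact congrArg Prod.fst hkl
        · apply hcol
          rw [show (s(a (n : ZMod (2*n)), xa ((l : ℕ) : ZMod (2*n))) : Sym2 Γ)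
              = s(xa ((l : ℕ) : ZMod (2*n)), a (n : ZMod (2*n))) from Sym2.eq_swap]
          exact congrArg Prod.snd hkl
      · -- w = xa m : impossible
        exfalso
        rcases (xa_comm_xa_iff hn0 _ _).1 hcu with h | h
        · rcases (xa_comm_xa_iff hn0 _ _).1 hcv with h' | h'
          · exact castne k l hne (h'.trans h).symm
          · rw [h] at h'
            exact castne' k l h'
        · rcases (xa_comm_xa_iff hn0 _ _).1 hcv with h' | h'
          · exact castne' k l (h'.trans h)
          · rw [h] at h'
            have h2 : ((l : ℕ) : ZMod (2*n)) = ((k : ℕ) : ZMod (2*n)) := by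
              have := nn_zero (n := n)
              linear_combination h' + this
            exact castne k l hne h2.symm
    have hFsurj : Function.Surjective F := by
      have : Function.Bijective F := (Fintype.bijective_iff_injective_and_card F).2
        ⟨hFinj, by simp⟩
      exact this.2
    -- the pair (xa k, a 1)
    obtain ⟨k, hkeq⟩ := hFsurj (c' s(a 0, a ((1:ℕ) : ZMod (2*n))),
      c' s(a (n : ZMod (2*n)), a ((1:ℕ) : ZMod (2*n))))
    have h21 : ((1:ℕ) : ZMod (2*n)) + ((1:ℕ) : ZMod (2*n)) ≠ 0 := by
      have := two_cast_ne_zero (n := n) hn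
      push_cast
      exact this
    have hne1 : (xa ((k : ℕ) : ZMod (2*n)) : Γ) ≠ a ((1:ℕ) : ZMod (2*n)) := by simp
    have hnadj1 : ¬ G.Adj (xa ((k : ℕ) : ZMod (2*n))) (a ((1:ℕ) : ZMod (2*n))) := by
      rintro ⟨-, hcomm⟩
      exact h21 ((a_comm_xa_iff _ _).1 hcomm.symm)
    obtain ⟨w, ⟨hwu, hcu⟩, ⟨hwv, hcv⟩, hcol⟩ := key _ _ hne1 hnadj1
    rcases w with m | m
    · have hm : m + m = 0 := (a_comm_xa_iff m _).1 hcu.symm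
      rcases two_torsion hn0 hm with rfl | rfl
      · exact hcol (congrArg Prod.fst hkeq)
      · exact hcol (congrArg Prod.snd hkeq)
    · exfalso
      exact h21 ((a_comm_xa_iff _ _).1 hcv.symm)
  -- conclude
  have hSne : S.Nonempty := ⟨3, h3⟩
  refine le_antisymm (Nat.sInf_le h3) (le_csInf hSne hlow)
end
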